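/- Under the second-order self-bounding assumption, fix w0 ∈ E, set L1(w0) = max{1, ρ0(F(w0)+1), ρ0(F(w0))·ρ0(F(w0)+1), ρ1(F(w0)+1)} and η = 1/L1(w0). For any ε > 0 and any u0 ∈ E with F(u0) ≤ F(w0) and ‖∇F(u0)‖ > ε, one has F(u0 − η·∇F(u0)) < F(u0) − ε²/(2·L1(w0)). -/

import Mathlib

/-!
Along a line `t ↦ F (u + t • v)` the Hessian bound `ρ1 (F ·)` is controlled as long as `F` stays
in a sublevel set, and a continuous-induction argument keeps it there. Descending along `-∇F w`
for time `1 / ρ1 (F w)` this gives `‖∇F w‖² ≤ 2 ρ1(F w) F w` (as `F ≥ 0`), hence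
`‖∇F w‖ ≤ ρ0 (F w)` since `x ≤ ρ1(x) θ(x)`. For the step `u0 - ∇F u0 / L1`, the slope of `F`
along the segment is then at most `ρ0(F w0 + 1) ρ0(F w0) / L1 ≤ 1`, so `F ≤ F w0 + 1` on the
segment, where the Hessian is at most `ρ1(F w0 + 1) ≤ L1`; the usual descent lemma concludes.
-/

/-- `θ(x) = ∫₀ˣ 1/ρ1(v) dv`. -/
noncomputable def sbTheta (ρ1 : ℝ → ℝ) (x : ℝ) : ℝ := ∫ v in (0 : ℝ)..x, 1 / ρ1 v

/-- `ρ0(x) = ρ1(x)·√(2 θ(x))`. -/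
noncomputable def sbRho0 (ρ1 : ℝ → ℝ) (x : ℝ) : ℝ := ρ1 x * Real.sqrt (2 * sbTheta ρ1 x)

open Set Filter Topology InnerProductSpace

section Profile

variable {ρ1 : ℝ → ℝ}

lemma intervalIntegrable_one_div_of_pos (hcont : ContinuousOn ρ1 (Ici 0))
    (hpos : ∀ x ∈ Ici (0 : ℝ), 0 < ρ1 x) {a b : ℝ} (ha : 0 ≤ a) (hb : 0 ≤ b) :
    IntervalIntegrable (fun v => 1 / ρ1 v) MeasureTheory.volume a b := by
  have hsub : uIcc a b ⊆ Ici 0 := fun x hx => (le_inf ha hb).trans hx.1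
  exact (continuousOn_const.div (hcont.mono hsub)
    fun x hx => (hpos x (hsub hx)).ne').intervalIntegrable

lemma sbTheta_monotoneOn (hcont : ContinuousOn ρ1 (Ici 0)) (hpos : ∀ x ∈ Ici (0 : ℝ), 0 < ρ1 x) :
    MonotoneOn (sbTheta ρ1) (Ici 0) := fun _ hx _ hy hxy =>
  intervalIntegral.integral_mono_interval le_rfl hx hxy
    (MeasureTheory.ae_restrict_of_forall_mem measurableSet_Ioc
      fun v hv => (one_div_pos.2 (hpos v hv.1.le)).le)
    (intervalIntegrable_one_div_of_pos hcont hpos le_rfl hy)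

lemma div_le_sbTheta (hmono : MonotoneOn ρ1 (Ici 0)) (hcont : ContinuousOn ρ1 (Ici 0))
    (hpos : ∀ x ∈ Ici (0 : ℝ), 0 < ρ1 x) {x : ℝ} (hx : 0 ≤ x) : x / ρ1 x ≤ sbTheta ρ1 x := by
  have h := intervalIntegral.integral_mono_on hx intervalIntegrable_const
    (intervalIntegrable_one_div_of_pos hcont hpos le_rfl hx)
    fun v hv => one_div_le_one_div_of_le (hpos v hv.1) (hmono hv.1 hx hv.2)
  simpa [sbTheta, div_eq_mul_inv, mul_comm] using h

lemma sbRho0_nonneg (hpos : ∀ x ∈ Ici (0 : ℝ), 0 < ρ1 x) {x : ℝ} (hx : 0 ≤ x) :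
    0 ≤ sbRho0 ρ1 x :=
  mul_nonneg (hpos x hx).le (Real.sqrt_nonneg _)

lemma sbRho0_monotoneOn (hmono : MonotoneOn ρ1 (Ici 0)) (hcont : ContinuousOn ρ1 (Ici 0))
    (hpos : ∀ x ∈ Ici (0 : ℝ), 0 < ρ1 x) : MonotoneOn (sbRho0 ρ1) (Ici 0) :=
  fun x hx y hy hxy => mul_le_mul (hmono hx hy hxy)
    (Real.sqrt_le_sqrt (by linarith [sbTheta_monotoneOn hcont hpos hx hy hxy]))
    (Real.sqrt_nonneg _) (hpos y hy).le

lemma two_mul_mul_le_sbRho0_sq (hmono : MonotoneOn ρ1 (Ici 0)) (hcont : ContinuousOn ρ1 (Ici 0))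
    (hpos : ∀ x ∈ Ici (0 : ℝ), 0 < ρ1 x) {x : ℝ} (hx : 0 ≤ x) :
    2 * ρ1 x * x ≤ sbRho0 ρ1 x ^ 2 := by
  have hρ := hpos x hx
  have hθ := div_le_sbTheta hmono hcont hpos hx
  have hθ_nonneg : 0 ≤ sbTheta ρ1 x := (div_nonneg hx hρ.le).trans hθ
  rw [div_le_iff₀ hρ] at hθ
  rw [sbRho0, mul_pow, Real.sq_sqrt (by positivity)]
  nlinarith

end Profile

section RealLine

variable {f f' f'' : ℝ → ℝ}

lemma sub_le_mul_sub_of_hasDerivAt_le (hf : ∀ t, HasDerivAt f (f' t) t) {K a b : ℝ}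
    (hab : a ≤ b) (h : ∀ t ∈ Ioo a b, f' t ≤ K) : f b - f a ≤ K * (b - a) :=
  (convex_Icc a b).image_sub_le_mul_sub_of_deriv_le
    (fun t _ => (hf t).continuousAt.continuousWithinAt)
    (fun t _ => (hf t).differentiableAt.differentiableWithinAt)
    (fun t ht => by rw [(hf t).deriv]; exact h t (by rwa [interior_Icc] at ht))
    a (left_mem_Icc.2 hab) b (right_mem_Icc.2 hab) hab

lemma le_taylor_two_of_second_deriv_le (hf : ∀ t, HasDerivAt f (f' t) t)
    (hf' : ∀ t, HasDerivAt f' (f'' t) t) {L T : ℝ} (hT : 0 ≤ T)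
    (h : ∀ t ∈ Icc 0 T, f'' t ≤ L) : f T ≤ f 0 + f' 0 * T + L * T ^ 2 / 2 := by
  have hψ : ∀ t, HasDerivAt (fun t => f t - f' 0 * t - L * t ^ 2 / 2) (f' t - f' 0 - L * t) t :=
    fun t => ((hf t).fun_sub ((hasDerivAt_id' t).const_mul (f' 0))).fun_sub
      (((hasDerivAt_pow 2 t).const_mul L).div_const 2) |>.congr_deriv (by simp; ring)
  have hψ_le := sub_le_mul_sub_of_hasDerivAt_le hψ hT (K := 0) fun t ht => by
    have := sub_le_mul_sub_of_hasDerivAt_le hf' ht.1.le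
      fun s hs => h s ⟨hs.1.le, hs.2.le.trans ht.2.le⟩
    linarith
  norm_num at hψ_le
  linarith

lemma le_add_of_deriv_le_one_on_sublevel (hf : ∀ t, HasDerivAt f (f' t) t) {c : ℝ}
    (h0 : f 0 ≤ c) (h : ∀ t, f t ≤ c + 1 → f' t ≤ 1) : ∀ t ∈ Icc (0 : ℝ) 1, f t ≤ c + t := by
  have hfc : Continuous f := continuous_iff_continuousAt.2 fun t => (hf t).continuousAt
  suffices Icc (0 : ℝ) 1 ⊆ {t | f t ≤ c + t} from this
  refine IsClosed.Icc_subset_of_forall_mem_nhdsWithin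
    ((isClosed_le hfc (continuous_const.add continuous_id)).inter isClosed_Icc)
    (by simpa using h0) ?_
  rintro x ⟨hx : f x ≤ c + x, -, hx1⟩
  obtain ⟨u, hxu, hu⟩ := exists_Ico_subset_of_mem_nhds
    (hfc.continuousAt.eventually_lt continuousAt_const (by linarith : f x < c + 1))
    ⟨x + 1, by linarith⟩
  filter_upwards [Ioo_mem_nhdsGT hxu] with t ht
  have := sub_le_mul_sub_of_hasDerivAt_le hf ht.1.le
    fun s hs => h s (hu ⟨hs.1.le, hs.2.trans ht.2⟩).le
  show f t ≤ c + t
  linarith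

lemma deriv_sq_le_of_second_deriv_le_on_sublevel (hf : ∀ t, HasDerivAt f (f' t) t)
    (hf' : ∀ t, HasDerivAt f' (f'' t) t) {L : ℝ} (hL : 0 < L) (hnn : ∀ t, 0 ≤ f t)
    (hneg : f' 0 ≤ 0) (h : ∀ t, 0 ≤ t → f t ≤ f 0 → f'' t ≤ L) :
    f' 0 ^ 2 ≤ 2 * L * f 0 := by
  set T := -f' 0 / L with hT_def
  have hT : 0 ≤ T := div_nonneg (neg_nonneg.2 hneg) hL.le
  have hfc : Continuous f := continuous_iff_continuousAt.2 fun t => (hf t).continuousAt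
  have hf'c : Continuous f' := continuous_iff_continuousAt.2 fun t => (hf' t).continuousAt
  -- The second inequality keeps `f'` negative before time `T`, which keeps `f` below `f 0`.
  have hinv : Icc 0 T ⊆ {t | f t ≤ f 0 ∧ f' t ≤ f' 0 + L * t} := by
    refine IsClosed.Icc_subset_of_forall_mem_nhdsWithin
      (((isClosed_le hfc continuous_const).inter
        (isClosed_le hf'c (by fun_prop))).inter isClosed_Icc) ⟨le_rfl, by simp⟩ ?_
    rintro x ⟨⟨hfx, hf'x⟩, hx0, hxT⟩
    have hLx : L * x < -f' 0 := by
      rw [hT_def, lt_div_iff₀ hL] at hxT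
      linarith
    obtain ⟨u, hxu, hu⟩ := exists_Ico_subset_of_mem_nhds
      (hf'c.continuousAt.eventually_lt continuousAt_const (by linarith : f' x < 0))
      ⟨x + 1, by linarith⟩
    filter_upwards [Ioo_mem_nhdsGT hxu] with t ht
    have hdec : ∀ s ∈ Icc x t, f s ≤ f x := fun s hs => by
      have := sub_le_mul_sub_of_hasDerivAt_le hf hs.1 (K := 0)
        fun r hr => (hu ⟨hr.1.le, hr.2.trans_le (hs.2.trans ht.2.le)⟩).le
      linarith
    have := sub_le_mul_sub_of_hasDerivAt_le hf' ht.1.le fun s hs =>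
      h s (hx0.trans hs.1.le) ((hdec s ⟨hs.1.le, hs.2.le⟩).trans hfx)
    exact ⟨(hdec t ⟨ht.1.le, le_rfl⟩).trans hfx, by linarith⟩
  have htaylor := le_taylor_two_of_second_deriv_le hf hf' hT
    fun t ht => h t ht.1 (hinv ht).1
  have hT_eq : f' 0 * T + L * T ^ 2 / 2 = -(f' 0 ^ 2 / (2 * L)) := by
    rw [hT_def]
    field_simp
    ring
  have := hnn T
  rw [← div_le_iff₀' (by positivity)]
  linarith

end RealLine

section NormedSpace

variable {E G : Type*} [NormedAddCommGroup E] [NormedSpace ℝ E] [NormedAddCommGroup G]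
  [NormedSpace ℝ G] {F : E → G}

lemma hasDerivAt_comp_add_smul (hF : Differentiable ℝ F) (u v : E) (t : ℝ) :
    HasDerivAt (fun t : ℝ => F (u + t • v)) (fderiv ℝ F (u + t • v) v) t := by
  have hline : HasDerivAt (fun t : ℝ => u + t • v) v t := by
    simpa using ((hasDerivAt_id t).smul_const v).const_add u
  exact (hF _).hasFDerivAt.comp_hasDerivAt t hline

lemma hasDerivAt_fderiv_comp_add_smul (hF : Differentiable ℝ (fderiv ℝ F)) (u v : E) (t : ℝ) :
    HasDerivAt (fun t : ℝ => fderiv ℝ F (u + t • v) v)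
      (fderiv ℝ (fderiv ℝ F) (u + t • v) v v) t :=
  (hasDerivAt_comp_add_smul hF u v t).clm_apply (hasDerivAt_const t v) |>.congr_deriv
    (by simp)

end NormedSpace

section SelfBounding

variable {E : Type*} [NormedAddCommGroup E] [InnerProductSpace ℝ E] [CompleteSpace E]
  {F : E → ℝ} {ρ1 : ℝ → ℝ}

lemma norm_gradient_sq_le_of_selfBounding (hF : ContDiff ℝ 2 F) (hFnn : ∀ w, 0 ≤ F w)
    (hmono : MonotoneOn ρ1 (Ici 0)) (hpos : ∀ x ∈ Ici (0 : ℝ), 0 < ρ1 x)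
    (hbound : ∀ w, ‖fderiv ℝ (fderiv ℝ F) w‖ ≤ ρ1 (F w)) (w : E) :
    ‖gradient F w‖ ^ 2 ≤ 2 * ρ1 (F w) * F w := by
  set g := gradient F w
  have hρ := hpos _ (hFnn w)
  rcases eq_or_ne g 0 with hg | hg
  · rw [hg, norm_zero]
    nlinarith [hFnn w]
  have hg_pos : 0 < ‖g‖ ^ 2 := by positivity
  have hd1 := hasDerivAt_comp_add_smul (hF.differentiable two_ne_zero) w (-g)
  have hd2 := hasDerivAt_fderiv_comp_add_smul
    ((hF.fderiv_right (m := 1) le_rfl).differentiable one_ne_zero) w (-g)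
  have hf'0 : fderiv ℝ F (w + (0 : ℝ) • -g) (-g) = -‖g‖ ^ 2 := by
    rw [zero_smul, add_zero, ← inner_gradient_left, inner_neg_right, real_inner_self_eq_norm_sq]
  have key := deriv_sq_le_of_second_deriv_le_on_sublevel hd1 hd2 (mul_pos hρ hg_pos)
    (fun _ => hFnn _) (by rw [hf'0]; linarith) fun t _ ht => by
      rw [zero_smul, add_zero] at ht
      refine (Real.le_norm_self _).trans (ContinuousLinearMap.le_of_opNorm₂_le_of_le _
        ((hbound _).trans (hmono (hFnn _) (hFnn w) ht)) le_rfl le_rfl) |>.trans_eq ?_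
      rw [norm_neg]
      ring
  rw [hf'0, zero_smul, add_zero] at key
  nlinarith

lemma norm_gradient_le_sbRho0_of_le (hF : ContDiff ℝ 2 F) (hFnn : ∀ w, 0 ≤ F w)
    (hmono : MonotoneOn ρ1 (Ici 0)) (hcont : ContinuousOn ρ1 (Ici 0))
    (hpos : ∀ x ∈ Ici (0 : ℝ), 0 < ρ1 x)
    (hbound : ∀ w, ‖fderiv ℝ (fderiv ℝ F) w‖ ≤ ρ1 (F w)) {w : E} {c : ℝ} (hc : F w ≤ c) :
    ‖gradient F w‖ ≤ sbRho0 ρ1 c := by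
  have hsq := (norm_gradient_sq_le_of_selfBounding hF hFnn hmono hpos hbound w).trans
    (two_mul_mul_le_sbRho0_sq hmono hcont hpos (hFnn w))
  exact (pow_le_pow_iff_left₀ (norm_nonneg _) (sbRho0_nonneg hpos (hFnn w)) two_ne_zero).1 hsq
    |>.trans (sbRho0_monotoneOn hmono hcont hpos (hFnn w) ((hFnn w).trans hc) hc)

lemma le_sub_of_hessian_le_on_segment (hF : ContDiff ℝ 2 F) {u : E} {L : ℝ} (hL : 0 < L)
    (h : ∀ x ∈ segment ℝ u (u - (1 / L) • gradient F u), ‖fderiv ℝ (fderiv ℝ F) x‖ ≤ L) :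
    F (u - (1 / L) • gradient F u) ≤ F u - ‖gradient F u‖ ^ 2 / (2 * L) := by
  set g := gradient F u
  set v := u - (1 / L) • g - u
  have hv : v = -((1 / L) • g) := sub_sub_cancel_left _ _
  have hd1 := hasDerivAt_comp_add_smul (hF.differentiable two_ne_zero) u v
  have hd2 := hasDerivAt_fderiv_comp_add_smul
    ((hF.fderiv_right (m := 1) le_rfl).differentiable one_ne_zero) u v
  have htaylor := le_taylor_two_of_second_deriv_le hd1 hd2 zero_le_one (L := L * ‖v‖ ^ 2)
    fun t ht => by
      have hx : u + t • v ∈ segment ℝ u (u - (1 / L) • g) := by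
        rw [segment_eq_image']
        exact ⟨t, ht, rfl⟩
      refine (Real.le_norm_self _).trans (ContinuousLinearMap.le_of_opNorm₂_le_of_le _
        (h _ hx) le_rfl le_rfl) |>.trans_eq ?_
      ring
  have hf'0 : fderiv ℝ F (u + (0 : ℝ) • v) v = -(‖g‖ ^ 2 / L) := by
    rw [zero_smul, add_zero, ← inner_gradient_left, hv, inner_neg_right, real_inner_smul_right,
      real_inner_self_eq_norm_sq]
    ring
  have hvn : ‖v‖ = ‖g‖ / L := by
    rw [hv, norm_neg, norm_smul, Real.norm_of_nonneg (by positivity)]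
    ring
  rw [hf'0, hvn, one_smul, add_sub_cancel, zero_smul, add_zero] at htaylor
  convert htaylor using 1
  field_simp
  ring

end SelfBounding

theorem gd_decrease_step_of_selfbounding_general (d : ℕ)
    (F : EuclideanSpace ℝ (Fin d) → ℝ)
    (hF : ContDiff ℝ 2 F) (hFnn : ∀ w, 0 ≤ F w)
    (ρ1 : ℝ → ℝ) (hρ1mono : MonotoneOn ρ1 (Set.Ici 0))
    (hρ1cont : ContinuousOn ρ1 (Set.Ici 0))
    (hρ1pos : ∀ x ∈ Set.Ici (0 : ℝ), 0 < ρ1 x)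
    (hbound : ∀ w, ‖fderiv ℝ (fderiv ℝ F) w‖ ≤ ρ1 (F w))
    (w0 : EuclideanSpace ℝ (Fin d)) (L1w0 : ℝ)
    (hL1w0 : L1w0 = max (max 1 (sbRho0 ρ1 (F w0 + 1)))
      (max (sbRho0 ρ1 (F w0) * sbRho0 ρ1 (F w0 + 1)) (ρ1 (F w0 + 1))))
    (ε : ℝ) (hε : 0 < ε)
    (u0 : EuclideanSpace ℝ (Fin d)) (hu0 : F u0 ≤ F w0)
    (hgrad : ε < ‖gradient F u0‖) :
    F (u0 - (1 / L1w0) • gradient F u0) < F u0 - ε ^ 2 / (2 * L1w0) := by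
  have hL1 : 1 ≤ L1w0 := hL1w0 ▸ le_max_of_le_left (le_max_left _ _)
  have hprod : sbRho0 ρ1 (F w0) * sbRho0 ρ1 (F w0 + 1) ≤ L1w0 :=
    hL1w0 ▸ le_max_of_le_right (le_max_left _ _)
  have hρ1L : ρ1 (F w0 + 1) ≤ L1w0 := hL1w0 ▸ le_max_of_le_right (le_max_right _ _)
  have hFw0 : 0 ≤ F w0 := (hFnn u0).trans hu0
  have hgrad_le : ∀ {w c}, F w ≤ c → ‖gradient F w‖ ≤ sbRho0 ρ1 c :=
    norm_gradient_le_sbRho0_of_le hF hFnn hρ1mono hρ1cont hρ1pos hbound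
  set g := gradient F u0
  set v := u0 - (1 / L1w0) • g - u0
  have hvn : ‖v‖ ≤ sbRho0 ρ1 (F w0) / L1w0 := by
    rw [show v = -((1 / L1w0) • g) from sub_sub_cancel_left _ _, norm_neg, norm_smul,
      Real.norm_of_nonneg (by positivity), one_div_mul_eq_div]
    gcongr
    exact hgrad_le hu0
  have hclimb := le_add_of_deriv_le_one_on_sublevel
    (hasDerivAt_comp_add_smul (hF.differentiable two_ne_zero) u0 v) (by simpa using hu0)
    fun t ht => by
      rw [← inner_gradient_left]
      calc _ ≤ ‖gradient F (u0 + t • v)‖ * ‖v‖ := real_inner_le_norm _ _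
        _ ≤ sbRho0 ρ1 (F w0 + 1) * (sbRho0 ρ1 (F w0) / L1w0) :=
          mul_le_mul (hgrad_le ht) hvn (norm_nonneg _) (sbRho0_nonneg hρ1pos (by linarith))
        _ ≤ 1 := by rw [mul_div_assoc', div_le_one (by linarith)]; linarith
  have hdesc := le_sub_of_hessian_le_on_segment hF (by linarith : 0 < L1w0) fun x hx => by
    rw [segment_eq_image'] at hx
    obtain ⟨t, ht, rfl⟩ := hx
    exact (hbound _).trans <| (hρ1mono (hFnn _) (by simp only [mem_Ici]; linarith)
      ((hclimb t ht).trans (by linarith [ht.2]))).trans hρ1L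
  have hε_lt : ε ^ 2 / (2 * L1w0) < ‖g‖ ^ 2 / (2 * L1w0) := by gcongr
  linarith

/-- A gradient step with step size `1/L1(w0)` from any point `u0` of the `F(w0)`-sublevel
set with `‖∇F(u0)‖ > ε` decreases `F` by more than `ε²/(2 L1(w0))`. -/
theorem gd_decrease_step_of_selfbounding (d : ℕ) (hd : 1 ≤ d)
    (F : EuclideanSpace ℝ (Fin d) → ℝ)
    (hF : ContDiff ℝ 2 F) (hFnn : ∀ w, 0 ≤ F w)
    (ρ1 : ℝ → ℝ) (hρ1mono : MonotoneOn ρ1 (Set.Ici 0))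
    (hρ1cont : ContinuousOn ρ1 (Set.Ici 0))
    (hρ1pos : ∀ x ∈ Set.Ici (0 : ℝ), 0 < ρ1 x)
    (hbound : ∀ w, ‖fderiv ℝ (fderiv ℝ F) w‖ ≤ ρ1 (F w))
    (w0 : EuclideanSpace ℝ (Fin d)) (L1w0 : ℝ)
    (hL1w0 : L1w0 = max (max 1 (sbRho0 ρ1 (F w0 + 1)))
      (max (sbRho0 ρ1 (F w0) * sbRho0 ρ1 (F w0 + 1)) (ρ1 (F w0 + 1))))
    (ε : ℝ) (hε : 0 < ε)
    (u0 : EuclideanSpace ℝ (Fin d)) (hu0 : F u0 ≤ F w0)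
    (hgrad : ε < ‖gradient F u0‖) :
    F (u0 - (1 / L1w0) • gradient F u0) < F u0 - ε ^ 2 / (2 * L1w0) :=
  gd_decrease_step_of_selfbounding_general d F hF hFnn ρ1 hρ1mono hρ1cont hρ1pos hbound w0 L1w0
    hL1w0 ε hε u0 hu0 hgrad
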